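/- arXiv:1807.00030 — 4 statements merged into one kernel-verified Lean document; each statement's English description precedes it below -/
import Mathlib

section
/- The first dyadic inference rule is sound: if a rooted binary tree displays both pq|o and qp'|o (with all leaves distinct as appropriate), then it displays pp'|o. -/
inductive BTree (α : Type) : Type
  | leaf : α → BTree α
  | node : BTree α → BTree α → BTree α

namespace BTree

variable {α : Type}

def leavesList : BTree α → List α
  | .leaf a => [a]
  | .node l r => leavesList l ++ leavesList r

/-- `a` is a leaf label of `T`. -/
def IsLeaf (T : BTree α) (a : α) : Prop := a ∈ T.leavesList

/-- A valid rooted binary tree has pairwise distinct leaf labels. -/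
def Valid (T : BTree α) : Prop := T.leavesList.Nodup

/-- The root-to-leaf path (as a list of left/right choices) of the leaf labeled `x`, if any. -/
def find [DecidableEq α] : BTree α → α → Option (List Bool)
  | .leaf a, x => if x = a then some [] else none
  | .node l r, x =>
    match find l x with
    | some p => some (false :: p)
    | none => (find r x).map (fun p => true :: p)

def commonPrefix : List Bool → List Bool → List Bool
  | a :: as, b :: bs => if a = b then a :: commonPrefix as bs else []
  | _, _ => []

/-- The (path to the) lowest common ancestor of leaves `p` and `q` in `T`. -/
def lcaPath [DecidableEq α] (T : BTree α) (p q : α) : Option (List Bool) :=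
  match T.find p, T.find q with
  | some a, some b => some (commonPrefix a b)
  | _, _ => none

/-- The node at path `s` is a proper descendant of the node at path `t`. -/
def ProperDesc (s t : List Bool) : Prop := t <+: s ∧ t ≠ s

/-- `T` displays the rooted triple `pq|o`: the leaves are distinct and
`lca(p,q)` is a proper descendant of `lca(p,o) = lca(q,o)`. -/
def Displays [DecidableEq α] (T : BTree α) (p q o : α) : Prop :=
  p ≠ q ∧ p ≠ o ∧ q ≠ o ∧
  ∃ u v, T.lcaPath p q = some u ∧ T.lcaPath p o = some v ∧
    T.lcaPath q o = some v ∧ ProperDesc u v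

end BTree

section Triples

variable {α : Type} [DecidableEq α]

/-- A rooted triple `pq|o`: an unordered pair of leaves together with a third leaf. -/
abbrev RTriple (α : Type) := Sym2 α × α

/-- `T` displays the rooted triple `t`. -/
def DisplaysT (T : BTree α) (t : RTriple α) : Prop :=
  ∃ p q, t.1 = s(p, q) ∧ BTree.Displays T p q t.2

def DisplaysAll (T : BTree α) (R : Set (RTriple α)) : Prop := ∀ t ∈ R, DisplaysT T t

/-- A triple set is consistent if some (valid) rooted binary tree displays all its triples. -/
def Consistent (R : Set (RTriple α)) : Prop := ∃ T : BTree α, T.Valid ∧ DisplaysAll T R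

/-- Closure of a consistent triple set: the triples displayed by every tree displaying `R`. -/
def clC (R : Set (RTriple α)) : Set (RTriple α) :=
  {t | ∀ T : BTree α, T.Valid → DisplaysAll T R → DisplaysT T t}

/-- Closure of an arbitrary (possibly inconsistent) triple set:
triples entailed by some consistent subset. -/
def cl (R : Set (RTriple α)) : Set (RTriple α) :=
  {t | ∃ R' ⊆ R, Consistent R' ∧ t ∈ clC R'}

end Triples


namespace BTree

lemma commonPrefix_prefix_left : ∀ a b : List Bool, commonPrefix a b <+: a
  | [], _ => by simp [commonPrefix]
  | _ :: _, [] => by simp [commonPrefix]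
  | x :: as, y :: bs => by
    by_cases h : x = y <;> simp [commonPrefix, h, commonPrefix_prefix_left as bs]

lemma commonPrefix_prefix_right : ∀ a b : List Bool, commonPrefix a b <+: b
  | [], _ => by simp [commonPrefix]
  | _ :: _, [] => by simp [commonPrefix]
  | x :: as, y :: bs => by
    by_cases h : x = y
    · subst h
      simp only [commonPrefix, if_pos rfl]
      exact List.cons_prefix_cons.mpr ⟨rfl, commonPrefix_prefix_right as bs⟩
    · simp [commonPrefix, h]

lemma prefix_commonPrefix : ∀ t a b : List Bool, t <+: a → t <+: b → t <+: commonPrefix a b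
  | [], _, _, _, _ => List.nil_prefix
  | x :: ts, a, b, ha, hb => by
    obtain ⟨as, rfl⟩ := ha
    obtain ⟨bs, rfl⟩ := hb
    simp only [List.cons_append, commonPrefix, if_pos rfl]
    exact List.cons_prefix_cons.mpr ⟨rfl,
      prefix_commonPrefix ts _ _ (List.prefix_append ts as) (List.prefix_append ts bs)⟩

lemma lcaPath_eq {α : Type} [DecidableEq α] {T : BTree α} {p q : α} {v : List Bool}
    (h : T.lcaPath p q = some v) :
    ∃ a b, T.find p = some a ∧ T.find q = some b ∧ commonPrefix a b = v := by
  unfold BTree.lcaPath at h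
  cases hp : T.find p <;> cases hq : T.find q <;> rw [hp, hq] at h <;> simp_all

end BTree

/-- First dyadic inference rule: {pq|o, qp'|o} ⊢ pp'|o. -/
theorem stmt3 {α : Type} [DecidableEq α] (T : BTree α) (hT : T.Valid)
    (p q p' o : α)
    (h1 : p ≠ q) (h2 : p ≠ p') (h3 : q ≠ p')
    (h4 : o ≠ p) (h5 : o ≠ q) (h6 : o ≠ p')
    (hA : BTree.Displays T p q o) (hB : BTree.Displays T q p' o) :
    BTree.Displays T p p' o := by
  obtain ⟨-, -, -, u, v, hu, hpo, hqo, hd⟩ := hA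
  obtain ⟨-, -, -, u', v', hu', hqo', hp'o, hd'⟩ := hB
  have hvv : v = v' := by rw [hqo] at hqo'; exact Option.some.inj hqo'
  subst hvv
  obtain ⟨a, b, hfa, hfb, hab⟩ := BTree.lcaPath_eq hu
  obtain ⟨b2, c, hfb2, hfc, hbc⟩ := BTree.lcaPath_eq hu'
  have hb2 : b2 = b := by rw [hfb] at hfb2; exact (Option.some.inj hfb2).symm
  subst hb2
  obtain ⟨hvu, hvune⟩ := hd
  obtain ⟨hvu', hvune'⟩ := hd'
  obtain ⟨s, rfl⟩ := hvu
  cases s with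
  | nil => exact (hvune (by simp)).elim
  | cons x s =>
    obtain ⟨s', rfl⟩ := hvu'
    cases s' with
    | nil => exact (hvune' (by simp)).elim
    | cons y s' =>
      have hpre : v ++ [x] <+: v ++ x :: s := ⟨s, by simp⟩
      have hpre' : v ++ [y] <+: v ++ y :: s' := ⟨s', by simp⟩
      have hxa : v ++ [x] <+: a :=
        hpre.trans (hab ▸ BTree.commonPrefix_prefix_left _ _)
      have hxb : v ++ [x] <+: b2 :=
        hpre.trans (hab ▸ BTree.commonPrefix_prefix_right _ _)
      have hyb : v ++ [y] <+: b2 :=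
        hpre'.trans (hbc ▸ BTree.commonPrefix_prefix_left _ _)
      have hyc : v ++ [y] <+: c :=
        hpre'.trans (hbc ▸ BTree.commonPrefix_prefix_right _ _)
      have hxy : x = y := by
        have := List.prefix_of_prefix_length_le hxb hyb (by simp)
        simpa using this
      subst hxy
      have hxc : v ++ [x] <+: BTree.commonPrefix a c :=
        BTree.prefix_commonPrefix _ _ _ hxa hyc
      refine ⟨h2, h4.symm, h6.symm, BTree.commonPrefix a c, v, ?_, hpo, hp'o, ?_, ?_⟩
      · unfold BTree.lcaPath
        rw [hfa, hfc]
      · exact (List.prefix_append v [x]).trans hxc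
      · intro hve
        obtain ⟨t, ht⟩ := hxc
        rw [← hve] at ht
        have : v.length + 1 + t.length = v.length := by
          simpa using congrArg List.length ht
        omega
end

section
/- The third dyadic inference rule is sound: if a rooted binary tree displays pp'|o and oo'|p, then it displays both pp'|o' and oo'|p'. -/
lemma commonPrefix_comm : ∀ a b : List Bool, BTree.commonPrefix a b = BTree.commonPrefix b a := by
  intro a
  induction a with
  | nil => intro b; cases b <;> rfl
  | cons x as ih =>
    intro b
    cases b with
    | nil => rfl
    | cons y bs =>
      simp only [BTree.commonPrefix]
      by_cases h : x = y
      · subst h; simp [ih]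
      · simp [h, Ne.symm h]

lemma commonPrefix_three : ∀ a b c : List Bool,
    BTree.commonPrefix a b <+: BTree.commonPrefix b c →
    BTree.commonPrefix a b ≠ BTree.commonPrefix b c →
    BTree.commonPrefix a c = BTree.commonPrefix a b := by
  intro a
  induction a with
  | nil =>
    intro b c _ _
    cases b <;> cases c <;> rfl
  | cons x as ih =>
    intro b c hpre hne
    cases b with
    | nil =>
      exfalso; apply hne
      cases c <;> rfl
    | cons y bs =>
      cases c with
      | nil =>
        exfalso; apply hne
        have h1 : BTree.commonPrefix (y :: bs) ([] : List Bool) = [] := rfl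
        rw [h1] at hpre ⊢
        exact List.prefix_nil.mp hpre
      | cons z cs =>
        by_cases hxy : x = y
        · subst hxy
          by_cases hxz : x = z
          · subst hxz
            simp only [BTree.commonPrefix, eq_self_iff_true, if_true, List.cons_prefix_cons,
              true_and, ne_eq, List.cons.injEq, not_and] at hpre hne ⊢
            exact ih bs cs hpre hne
          · simp only [BTree.commonPrefix, eq_self_iff_true, if_true, if_neg hxz] at hpre
            exact absurd (List.prefix_nil.mp hpre) (by simp)
        · by_cases hyz : y = z
          · subst hyz
            simp [BTree.commonPrefix, hxy]
          · exfalso; apply hne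
            simp [BTree.commonPrefix, hxy, hyz]

lemma lcaPath_comm {α : Type} [DecidableEq α] (T : BTree α) (x y : α) :
    T.lcaPath x y = T.lcaPath y x := by
  unfold BTree.lcaPath
  cases hx : T.find x <;> cases hy : T.find y <;> simp [commonPrefix_comm]

lemma find_isSome {α : Type} [DecidableEq α] (T : BTree α) (x y : α) (u : List Bool)
    (h : T.lcaPath x y = some u) :
    ∃ a b, T.find x = some a ∧ T.find y = some b ∧ BTree.commonPrefix a b = u := by
  unfold BTree.lcaPath at h
  cases hx : T.find x <;> cases hy : T.find y <;> rw [hx, hy] at h <;> simp at h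
  exact ⟨_, _, rfl, rfl, h⟩

/-- Third dyadic inference rule: {pp'|o, oo'|p} ⊢ {pp'|o', oo'|p'}. -/
theorem stmt5 {α : Type} [DecidableEq α] (T : BTree α) (hT : T.Valid)
    (p p' o o' : α)
    (h1 : p ≠ p') (h2 : p ≠ o) (h3 : p ≠ o') (h4 : p' ≠ o) (h5 : p' ≠ o') (h6 : o ≠ o')
    (hA : BTree.Displays T p p' o) (hB : BTree.Displays T o o' p) :
    BTree.Displays T p p' o' ∧ BTree.Displays T o o' p' := by
  obtain ⟨-, -, -, u, v, hu, hv, hv', hpre, hne⟩ := hA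
  obtain ⟨-, -, -, s, w, hs, hw, hw', hspre, hsne⟩ := hB
  rw [lcaPath_comm] at hw
  rw [hv] at hw
  injection hw with hw; subst hw
  obtain ⟨P, P', hPeq, hP'eq, hu⟩ := find_isSome T p p' u hu
  obtain ⟨O, O', hOeq, hO'eq, hs⟩ := find_isSome T o o' s hs
  have hv : BTree.commonPrefix P O = v := by
    obtain ⟨a, b, ha, hb, hab⟩ := find_isSome T p o v hv
    rw [hPeq] at ha; rw [hOeq] at hb
    injection ha with ha; injection hb with hb; rw [ha, hb]; exact hab
  have hv' : BTree.commonPrefix P' O = v := by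
    obtain ⟨a, b, ha, hb, hab⟩ := find_isSome T p' o v hv'
    rw [hP'eq] at ha; rw [hOeq] at hb
    injection ha with ha; injection hb with hb; rw [ha, hb]; exact hab
  have key1 : BTree.commonPrefix P O' = v := by
    have := commonPrefix_three P O O' (by rw [hv, hs]; exact hspre)
      (by rw [hv, hs]; exact hsne)
    rw [this, hv]
  have key2 : BTree.commonPrefix P' O' = v := by
    have := commonPrefix_three P' O O' (by rw [hv', hs]; exact hspre)
      (by rw [hv', hs]; exact hsne)
    rw [this, hv']
  constructor
  · exact ⟨h1, h3, h5, u, v,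
      by simp [BTree.lcaPath, hPeq, hP'eq, hu],
      by simp [BTree.lcaPath, hPeq, hO'eq, key1],
      by simp [BTree.lcaPath, hP'eq, hO'eq, key2], hpre, hne⟩
  · exact ⟨h6, Ne.symm h4, Ne.symm h5, s, v,
      by simp [BTree.lcaPath, hOeq, hO'eq, hs],
      by simp [BTree.lcaPath, hOeq, hP'eq, commonPrefix_comm O P', hv'],
      by simp [BTree.lcaPath, hO'eq, hP'eq, commonPrefix_comm O' P', key2],
      hspre, hsne⟩
end

section
/- For every real ε with 0 < ε < 1/4 and every integer n ≥ 2: (n-1)^(2-ε) < n^(⌈1+1/ε⌉·(1-ε)) and ⌈1+1/ε⌉·(1-ε) < ⌈1/ε⌉; consequently (n + n^⌈1+1/ε⌉ - 1)^(1-ε) · (n-1) < n · n^⌈1/ε⌉. -/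
set_option maxHeartbeats 1000000 in
/-- The arithmetic core of the inapproximability gap: for 0 < ε < 1/4 and n ≥ 2,
(n-1)^(2-ε) < n^(⌈1+1/ε⌉·(1-ε)), ⌈1+1/ε⌉·(1-ε) < ⌈1/ε⌉, and consequently
(n + n^⌈1+1/ε⌉ - 1)^(1-ε) · (n-1) < n · n^⌈1/ε⌉. -/
theorem stmt17 : ∀ ε : ℝ, 0 < ε → ε < 1 / 4 → ∀ n : ℕ, 2 ≤ n →
    ((n : ℝ) - 1) ^ ((2 : ℝ) - ε) <
      (n : ℝ) ^ (((⌈(1 : ℝ) + 1 / ε⌉ : ℤ) : ℝ) * (1 - ε)) ∧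
    ((⌈(1 : ℝ) + 1 / ε⌉ : ℤ) : ℝ) * (1 - ε) < ((⌈(1 : ℝ) / ε⌉ : ℤ) : ℝ) ∧
    ((n : ℝ) + (n : ℝ) ^ ((⌈(1 : ℝ) + 1 / ε⌉ : ℤ) : ℝ) - 1) ^ ((1 : ℝ) - ε) * ((n : ℝ) - 1)
      < (n : ℝ) * (n : ℝ) ^ ((⌈(1 : ℝ) / ε⌉ : ℤ) : ℝ) := by
  intro ε hε hε4 n hn
  set N : ℝ := (n : ℝ) with hNdef
  have hN2 : (2:ℝ) ≤ N := by rw [hNdef]; exact_mod_cast hn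
  have hN1 : (1:ℝ) < N := by linarith
  have hN0 : (0:ℝ) < N := by linarith
  have hN1' : (0:ℝ) < N - 1 := by linarith
  have h1ε : (0:ℝ) < 1 - ε := by linarith
  set c : ℤ := ⌈(1:ℝ) + 1/ε⌉ with hc
  set d : ℤ := ⌈(1:ℝ)/ε⌉ with hd
  have hcd : c = d + 1 := by
    rw [hc, hd, add_comm (1:ℝ) (1/ε), Int.ceil_add_one, one_div]
  have hle : (1:ℝ) + 1/ε ≤ (c:ℝ) := Int.le_ceil _
  have huε : ε * (1/ε) = 1 := by field_simp
  have hu4 : (4:ℝ) < 1/ε := by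
    rw [lt_div_iff₀ hε]; linarith
  have hcε : (1:ℝ) < (c:ℝ) * ε := by nlinarith
  have hc2 : (2:ℝ) - ε < (c:ℝ) * (1 - ε) := by nlinarith
  refine ⟨?_, ?_, ?_⟩
  · calc (N - 1) ^ ((2:ℝ) - ε) < N ^ ((2:ℝ) - ε) :=
          Real.rpow_lt_rpow hN1'.le (by linarith) (by linarith)
      _ < N ^ ((c:ℝ) * (1 - ε)) := (Real.rpow_lt_rpow_left_iff hN1).mpr hc2
  · have hcdR : ((c:ℝ)) = (d:ℝ) + 1 := by exact_mod_cast hcd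
    rw [hcdR] at hcε ⊢
    nlinarith
  · set x : ℝ := N ^ ((c:ℝ)) with hx
    have hxpos : 0 < x := Real.rpow_pos_of_pos hN0 _
    have hc2' : (2:ℝ) ≤ (c:ℝ) := by nlinarith [hcε, hε.le]
    have hx2 : (N - 1) ^ 2 ≤ x := by
      have h1 : N ^ ((2:ℝ)) ≤ x := by
        rw [hx]; exact (Real.rpow_le_rpow_left_iff hN1).mpr hc2'
      have h2 : N ^ ((2:ℝ)) = N * N := by
        rw [show (2:ℝ) = 1 + 1 by norm_num, Real.rpow_add hN0, Real.rpow_one]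
      calc (N - 1) ^ 2 ≤ N * N := by nlinarith
        _ = N ^ ((2:ℝ)) := h2.symm
        _ ≤ x := h1
    set n' : ℝ := N + x - 1 with hn'
    have hn'pos : 0 < n' := by nlinarith
    have hcp1 : N ^ ((c:ℝ) + 1) = x * N := by
      rw [Real.rpow_add hN0, Real.rpow_one]
    have h1 : n' * (N - 1) ≤ N ^ ((c:ℝ) + 1) := by
      rw [hcp1]; nlinarith
    have h2 : n' ≤ N ^ ((c:ℝ) + 1) / (N - 1) := (le_div_iff₀ hN1').mpr h1
    have h3 : n' ^ ((1:ℝ) - ε) ≤ (N ^ ((c:ℝ) + 1) / (N - 1)) ^ ((1:ℝ) - ε) :=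
      Real.rpow_le_rpow hn'pos.le h2 h1ε.le
    have h4 : (N ^ ((c:ℝ) + 1) / (N - 1)) ^ ((1:ℝ) - ε)
        = N ^ (((c:ℝ) + 1) * (1 - ε)) / (N - 1) ^ ((1:ℝ) - ε) := by
      rw [Real.div_rpow (Real.rpow_nonneg hN0.le _) hN1'.le,
        Real.rpow_mul hN0.le]
    have key : (N - 1) ^ ((1:ℝ) - ε) * (N - 1) ^ ε = N - 1 := by
      rw [← Real.rpow_add hN1']; norm_num
    have hrp : 0 < (N - 1) ^ ((1:ℝ) - ε) := Real.rpow_pos_of_pos hN1' _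
    have heq : N ^ (((c:ℝ) + 1) * (1 - ε)) / (N - 1) ^ ((1:ℝ) - ε) * (N - 1)
        = N ^ (((c:ℝ) + 1) * (1 - ε)) * (N - 1) ^ ε := by
      rw [div_mul_eq_mul_div, div_eq_iff (ne_of_gt hrp)]
      linear_combination (-(N ^ (((c:ℝ) + 1) * (1 - ε)))) * key
    have h5 : n' ^ ((1:ℝ) - ε) * (N - 1)
        ≤ N ^ (((c:ℝ) + 1) * (1 - ε)) * (N - 1) ^ ε := by
      calc n' ^ ((1:ℝ) - ε) * (N - 1)
          ≤ N ^ (((c:ℝ) + 1) * (1 - ε)) / (N - 1) ^ ((1:ℝ) - ε) * (N - 1) := by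
            apply mul_le_mul_of_nonneg_right _ hN1'.le
            rw [← h4]; exact h3
        _ = _ := heq
    have h6 : N ^ (((c:ℝ) + 1) * (1 - ε)) * (N - 1) ^ ε
        < N ^ (((c:ℝ) + 1) * (1 - ε)) * N ^ ε := by
      apply mul_lt_mul_of_pos_left _ (Real.rpow_pos_of_pos hN0 _)
      exact Real.rpow_lt_rpow hN1'.le (by linarith) hε
    have h7 : N ^ (((c:ℝ) + 1) * (1 - ε)) * N ^ ε
        = N ^ (((c:ℝ) + 1) * (1 - ε) + ε) := (Real.rpow_add hN0 _ _).symm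
    have h8 : ((c:ℝ) + 1) * (1 - ε) + ε ≤ (c:ℝ) := by
      have H : ∀ C E : ℝ, 1 < C * E → (C + 1) * (1 - E) + E ≤ C := by
        intro C E h; nlinarith
      exact H _ _ hcε
    have h9 : N ^ (((c:ℝ) + 1) * (1 - ε) + ε) ≤ x :=
      (Real.rpow_le_rpow_left_iff hN1).mpr h8
    have hfin : N * N ^ ((d:ℝ)) = x := by
      have hcdR : ((c:ℝ)) = (d:ℝ) + 1 := by exact_mod_cast hcd
      rw [hx, hcdR, Real.rpow_add hN0, Real.rpow_one, mul_comm]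
    calc n' ^ ((1:ℝ) - ε) * (N - 1)
        ≤ N ^ (((c:ℝ) + 1) * (1 - ε)) * (N - 1) ^ ε := h5
      _ < N ^ (((c:ℝ) + 1) * (1 - ε)) * N ^ ε := h6
      _ = N ^ (((c:ℝ) + 1) * (1 - ε) + ε) := h7
      _ ≤ x := h9
      _ = N * N ^ ((d:ℝ)) := hfin.symm
end

section
/- If R' is a consistent set of rooted triples over leaf set L such that every leaf of L appears in some triple of R', and |L| ≥ 3, then the Aho graph [R', L] is disconnected. -/
/-- The Aho graph [R', L]: vertices are the leaves in L, with an edge {p,q} whenever some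
triple pq|o of R' has p, q, o ∈ L. -/
def AhoGraph {α : Type} [DecidableEq α] (R' : Set (RTriple α)) (L : Finset α) :
    SimpleGraph {a // a ∈ L} where
  Adj x y := x ≠ y ∧ ∃ o ∈ L, (s(x.1, y.1), o) ∈ R'
  symm := by
    constructor
    intro x y h
    obtain ⟨hxy, o, ho, hmem⟩ := h
    refine ⟨hxy.symm, o, ho, ?_⟩
    rw [Sym2.eq_swap]
    exact hmem
  loopless := by
    constructor
    intro x h
    exact h.1 rfl

section AuxProof

variable {α : Type} [DecidableEq α]

lemma cp_ne_nil {a b : List Bool} (h : BTree.commonPrefix a b ≠ []) :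
    ∃ c as bs, a = c :: as ∧ b = c :: bs := by
  cases a with
  | nil => simp [BTree.commonPrefix] at h
  | cons x as =>
    cases b with
    | nil => simp [BTree.commonPrefix] at h
    | cons y bs =>
      by_cases hxy : x = y
      · exact ⟨x, as, bs, rfl, by rw [hxy]⟩
      · simp [BTree.commonPrefix, hxy] at h

lemma cp_cons (c : Bool) (as bs : List Bool) :
    BTree.commonPrefix (c :: as) (c :: bs) = c :: BTree.commonPrefix as bs := by
  simp [BTree.commonPrefix]

lemma properDesc_cons {c : Bool} {u v : List Bool} (h : BTree.ProperDesc (c :: u) (c :: v)) :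
    BTree.ProperDesc u v := by
  obtain ⟨h1, h2⟩ := h
  refine ⟨(List.cons_prefix_cons.mp h1).2, fun he => h2 (by rw [he])⟩

lemma lcaPath_eq {T : BTree α} {p q : α} {u : List Bool} (h : T.lcaPath p q = some u) :
    ∃ a b, T.find p = some a ∧ T.find q = some b ∧ u = BTree.commonPrefix a b := by
  unfold BTree.lcaPath at h
  cases hp : T.find p with
  | none => rw [hp] at h; simp at h
  | some a =>
    cases hq : T.find q with
    | none => rw [hp, hq] at h; simp at h
    | some b =>
      rw [hp, hq] at h
      exact ⟨a, b, rfl, rfl, (Option.some_inj.mp h).symm⟩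

lemma displays_head {T : BTree α} {p q o : α} (h : BTree.Displays T p q o) :
    ∃ c as bs, T.find p = some (c :: as) ∧ T.find q = some (c :: bs) := by
  obtain ⟨_, _, _, u, v, hpq, hpo, hqo, hv, hne⟩ := h
  obtain ⟨a, b, hfp, hfq, hu⟩ := lcaPath_eq hpq
  have hune : u ≠ [] := by
    intro h0
    rw [h0] at hv hne
    exact hne (List.prefix_nil.mp hv)
  obtain ⟨c, as, bs, ha, hb⟩ := cp_ne_nil (hu ▸ hune)
  exact ⟨c, as, bs, ha ▸ hfp, hb ▸ hfq⟩

lemma find_node_left {l r : BTree α} {x : α} {a : List Bool}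
    (h : (BTree.node l r).find x = some (false :: a)) : l.find x = some a := by
  unfold BTree.find at h
  cases hl : l.find x with
  | some b => rw [hl] at h; simp at h; rw [h]
  | none => rw [hl] at h; simp [Option.map_eq_some_iff] at h

lemma find_node_right {l r : BTree α} {x : α} {a : List Bool}
    (h : (BTree.node l r).find x = some (true :: a)) : r.find x = some a := by
  unfold BTree.find at h
  cases hl : l.find x with
  | some b => rw [hl] at h; simp at h
  | none =>
    rw [hl] at h
    rw [Option.map_eq_some_iff] at h
    obtain ⟨b, hb, he⟩ := h
    simp at he
    rw [hb, he]

lemma find_node_shape {l r : BTree α} {x : α} {p : List Bool}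
    (h : (BTree.node l r).find x = some p) : ∃ c a, p = c :: a := by
  unfold BTree.find at h
  cases hl : l.find x with
  | some b => rw [hl] at h; exact ⟨false, b, (Option.some_inj.mp h).symm⟩
  | none =>
    rw [hl, Option.map_eq_some_iff] at h
    obtain ⟨b, _, he⟩ := h
    exact ⟨true, b, he.symm⟩

lemma displays_restrict_left {l r : BTree α} {p q o : α}
    (h : BTree.Displays (BTree.node l r) p q o)
    (hp : ∃ a, (BTree.node l r).find p = some (false :: a))
    (hq : ∃ a, (BTree.node l r).find q = some (false :: a))
    (ho : ∃ a, (BTree.node l r).find o = some (false :: a)) :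
    BTree.Displays l p q o := by
  obtain ⟨h1, h2, h3, u, v, hpq, hpo, hqo, hdesc⟩ := h
  obtain ⟨ap, hfp⟩ := hp
  obtain ⟨aq, hfq⟩ := hq
  obtain ⟨ao, hfo⟩ := ho
  have hlp := find_node_left hfp
  have hlq := find_node_left hfq
  have hlo := find_node_left hfo
  have hu : u = false :: BTree.commonPrefix ap aq := by
    obtain ⟨a, b, ha, hb, he⟩ := lcaPath_eq hpq
    rw [hfp] at ha; rw [hfq] at hb
    rw [he, ← Option.some_inj.mp ha, ← Option.some_inj.mp hb, cp_cons]
  have hv : v = false :: BTree.commonPrefix ap ao := by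
    obtain ⟨a, b, ha, hb, he⟩ := lcaPath_eq hpo
    rw [hfp] at ha; rw [hfo] at hb
    rw [he, ← Option.some_inj.mp ha, ← Option.some_inj.mp hb, cp_cons]
  have hv' : v = false :: BTree.commonPrefix aq ao := by
    obtain ⟨a, b, ha, hb, he⟩ := lcaPath_eq hqo
    rw [hfq] at ha; rw [hfo] at hb
    rw [he, ← Option.some_inj.mp ha, ← Option.some_inj.mp hb, cp_cons]
  refine ⟨h1, h2, h3, BTree.commonPrefix ap aq, BTree.commonPrefix ap ao, ?_, ?_, ?_, ?_⟩
  · unfold BTree.lcaPath; rw [hlp, hlq]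
  · unfold BTree.lcaPath; rw [hlp, hlo]
  · unfold BTree.lcaPath; rw [hlq, hlo]
    have h4 : BTree.commonPrefix aq ao = BTree.commonPrefix ap ao := by
      have := hv'.symm.trans hv
      simpa using this
    show some (BTree.commonPrefix aq ao) = some (BTree.commonPrefix ap ao)
    rw [h4]
  · exact properDesc_cons (hu ▸ hv ▸ hdesc)

lemma displays_restrict_right {l r : BTree α} {p q o : α}
    (h : BTree.Displays (BTree.node l r) p q o)
    (hp : ∃ a, (BTree.node l r).find p = some (true :: a))
    (hq : ∃ a, (BTree.node l r).find q = some (true :: a))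
    (ho : ∃ a, (BTree.node l r).find o = some (true :: a)) :
    BTree.Displays r p q o := by
  obtain ⟨h1, h2, h3, u, v, hpq, hpo, hqo, hdesc⟩ := h
  obtain ⟨ap, hfp⟩ := hp
  obtain ⟨aq, hfq⟩ := hq
  obtain ⟨ao, hfo⟩ := ho
  have hlp := find_node_right hfp
  have hlq := find_node_right hfq
  have hlo := find_node_right hfo
  have hu : u = true :: BTree.commonPrefix ap aq := by
    obtain ⟨a, b, ha, hb, he⟩ := lcaPath_eq hpq
    rw [hfp] at ha; rw [hfq] at hb
    rw [he, ← Option.some_inj.mp ha, ← Option.some_inj.mp hb, cp_cons]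
  have hv : v = true :: BTree.commonPrefix ap ao := by
    obtain ⟨a, b, ha, hb, he⟩ := lcaPath_eq hpo
    rw [hfp] at ha; rw [hfo] at hb
    rw [he, ← Option.some_inj.mp ha, ← Option.some_inj.mp hb, cp_cons]
  have hv' : v = true :: BTree.commonPrefix aq ao := by
    obtain ⟨a, b, ha, hb, he⟩ := lcaPath_eq hqo
    rw [hfq] at ha; rw [hfo] at hb
    rw [he, ← Option.some_inj.mp ha, ← Option.some_inj.mp hb, cp_cons]
  refine ⟨h1, h2, h3, BTree.commonPrefix ap aq, BTree.commonPrefix ap ao, ?_, ?_, ?_, ?_⟩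
  · unfold BTree.lcaPath; rw [hlp, hlq]
  · unfold BTree.lcaPath; rw [hlp, hlo]
  · unfold BTree.lcaPath; rw [hlq, hlo]
    have h4 : BTree.commonPrefix aq ao = BTree.commonPrefix ap ao := by
      have := hv'.symm.trans hv
      simpa using this
    show some (BTree.commonPrefix aq ao) = some (BTree.commonPrefix ap ao)
    rw [h4]
  · exact properDesc_cons (hu ▸ hv ▸ hdesc)

lemma aho_aux (R' : Set (RTriple α)) (L : Finset α)
    (hover : ∀ t ∈ R', (∀ x ∈ t.1, x ∈ L) ∧ t.2 ∈ L)
    (hcard : 2 ≤ L.card) (T : BTree α) :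
    (∀ t ∈ R', DisplaysT T t) → (∀ x ∈ L, (T.find x).isSome) →
    ¬ (AhoGraph R' L).Connected := by
  induction T with
  | leaf a =>
    intro _ hfind _
    obtain ⟨x, hx, y, hy, hxy⟩ := Finset.one_lt_card.mp hcard
    have hxa : x = a := by
      have := hfind x hx
      unfold BTree.find at this
      by_cases h : x = a
      · exact h
      · simp [h] at this
    have hya : y = a := by
      have := hfind y hy
      unfold BTree.find at this
      by_cases h : y = a
      · exact h
      · simp [h] at this
    exact hxy (hxa.trans hya.symm)
  | node l r ihl ihr =>
    intro hdisp hfind hconn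
    have hshape : ∀ x ∈ L, ∃ c a, (BTree.node l r).find x = some (c :: a) := by
      intro x hx
      obtain ⟨p, hp⟩ := Option.isSome_iff_exists.mp (hfind x hx)
      obtain ⟨c, a, ha⟩ := find_node_shape hp
      exact ⟨c, a, ha ▸ hp⟩
    have hmemL : ∀ t ∈ R', ∀ p q, t.1 = s(p, q) →
        p ∈ L ∧ q ∈ L ∧ t.2 ∈ L := by
      intro t ht p q hpq
      obtain ⟨h1, h2⟩ := hover t ht
      exact ⟨h1 p (by rw [hpq]; exact Sym2.mem_mk_left p q),
             h1 q (by rw [hpq]; exact Sym2.mem_mk_right p q), h2⟩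
    by_cases hF : ∀ x ∈ L, ∃ a, (BTree.node l r).find x = some (false :: a)
    · refine ihl ?_ ?_ hconn
      · intro t ht
        obtain ⟨p, q, hpq, hd⟩ := hdisp t ht
        obtain ⟨hp, hq, ho⟩ := hmemL t ht p q hpq
        exact ⟨p, q, hpq, displays_restrict_left hd (hF p hp) (hF q hq) (hF t.2 ho)⟩
      · intro x hx
        obtain ⟨a, ha⟩ := hF x hx
        rw [find_node_left ha]
        rfl
    · by_cases hT : ∀ x ∈ L, ∃ a, (BTree.node l r).find x = some (true :: a)
      · refine ihr ?_ ?_ hconn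
        · intro t ht
          obtain ⟨p, q, hpq, hd⟩ := hdisp t ht
          obtain ⟨hp, hq, ho⟩ := hmemL t ht p q hpq
          exact ⟨p, q, hpq, displays_restrict_right hd (hT p hp) (hT q hq) (hT t.2 ho)⟩
        · intro x hx
          obtain ⟨a, ha⟩ := hT x hx
          rw [find_node_right ha]
          rfl
      · push_neg at hF hT
        obtain ⟨x, hx, hxn⟩ := hF
        obtain ⟨y, hy, hyn⟩ := hT
        obtain ⟨cx, ax, hax⟩ := hshape x hx
        obtain ⟨cy, ay, hay⟩ := hshape y hy
        have hcx : cx = true := by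
          cases cx with
          | false => exact absurd hax (hxn ax)
          | true => rfl
        have hcy : cy = false := by
          cases cy with
          | false => rfl
          | true => exact absurd hay (hyn ay)
        set hb : {a // a ∈ L} → Bool :=
          fun z => (((BTree.node l r).find z.1).getD []).headI with hbdef
        have hedge : ∀ {a b : {a // a ∈ L}}, (AhoGraph R' L).Adj a b → hb a = hb b := by
          intro a b hab
          obtain ⟨_, o, ho, hmem⟩ := hab
          obtain ⟨p, q, hpq, hd⟩ := hdisp _ hmem
          obtain ⟨c, as, bs, hfp, hfq⟩ := displays_head hd
          simp only at hpq
          rw [Sym2.eq_iff] at hpq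
          rcases hpq with ⟨h1, h2⟩ | ⟨h1, h2⟩ <;>
            simp [hbdef, h1, h2, hfp, hfq]
        have hreach : ∀ {a b : {a // a ∈ L}}, (AhoGraph R' L).Reachable a b →
            hb a = hb b := by
          intro a b h
          obtain ⟨w⟩ := h
          induction w with
          | nil => rfl
          | cons h p ih => exact (hedge h).trans ih
        have := hreach (hconn.preconnected ⟨x, hx⟩ ⟨y, hy⟩)
        simp [hbdef, hax, hay, hcx, hcy] at this

end AuxProof

/-- Aho et al.'s necessary condition: if R' is consistent over leaf set L with |L| ≥ 3
(all triples over L, every leaf of L covered), then the Aho graph [R', L] is disconnected. -/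
theorem stmt18 {α : Type} [DecidableEq α] (R' : Set (RTriple α)) (L : Finset α)
    (hover : ∀ t ∈ R', (∀ x ∈ t.1, x ∈ L) ∧ t.2 ∈ L)
    (hcover : ∀ x ∈ L, ∃ t ∈ R', x ∈ t.1 ∨ x = t.2)
    (hcard : 3 ≤ L.card)
    (hcons : Consistent R') :
    ¬ (AhoGraph R' L).Connected := by
  obtain ⟨T, _, hdispAll⟩ := hcons
  have hdisp : ∀ t ∈ R', DisplaysT T t := hdispAll
  have hfind : ∀ x ∈ L, (T.find x).isSome := by
    intro x hx
    obtain ⟨t, ht, hmem⟩ := hcover x hx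
    obtain ⟨p, q, hpq, hd⟩ := hdisp t ht
    obtain ⟨_, _, _, u, v, hpq', hpo, hqo, _⟩ := hd
    obtain ⟨a, b, hfp, hfq, _⟩ := lcaPath_eq hpq'
    obtain ⟨a', b', _, hfo, _⟩ := lcaPath_eq hpo
    rcases hmem with hmem | hmem
    · rw [hpq, Sym2.mem_iff] at hmem
      rcases hmem with rfl | rfl
      · rw [hfp]; rfl
      · rw [hfq]; rfl
    · rw [hmem, hfo]; rfl
  exact aho_aux R' L hover (by omega) T hdisp hfind
end
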